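/- arXiv:2602.23140 — 2 statements merged into one kernel-verified Lean document; each statement's English description precedes it below -/
import Mathlib

section
/- The block upper-triangular matrices N(m, n, b) = [[I_{g'}, 0, 0, n]; [ᵗm, I_{g''}, ᵗn, b]; [0, 0, I_{g'}, -m]; [0, 0, 0, I_{g''}]] with the constraint ᵗn·m + b = ᵗm·n + ᵗb form a group under matrix multiplication, and each such matrix is symplectic. -/
open Matrix

variable (g' g'' : ℕ)

/-- The unipotent matrices `N(m, n, b)` in block form
`[[I, 0, 0, n]; [ᵗm, I, ᵗn, b]; [0, 0, I, -m]; [0, 0, 0, I]]`. -/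
def Nmat (m n : Matrix (Fin g') (Fin g'') ℝ) (b : Matrix (Fin g'') (Fin g'') ℝ) :
    Matrix ((Fin g' ⊕ Fin g'') ⊕ (Fin g' ⊕ Fin g'')) ((Fin g' ⊕ Fin g'') ⊕ (Fin g' ⊕ Fin g'')) ℝ :=
  Matrix.fromBlocks
    (Matrix.fromBlocks 1 0 mᵀ 1) (Matrix.fromBlocks 0 n nᵀ b)
    0 (Matrix.fromBlocks 1 (-m) 0 1)

/-- The standard symplectic form on ℝ^{2g}, `g = g' + g''`. -/
def Jmat : Matrix ((Fin g' ⊕ Fin g'') ⊕ (Fin g' ⊕ Fin g'')) ((Fin g' ⊕ Fin g'') ⊕ (Fin g' ⊕ Fin g'')) ℝ :=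
  Matrix.fromBlocks 0 1 (-1) 0

/-- The matrices `N(m, n, b)` with `ᵗn m + b = ᵗm n + ᵗb` are symplectic and form a
group: the identity is of this form, and the collection is closed under products and
inverses. -/
theorem Nmat_group (m n m₁ n₁ : Matrix (Fin g') (Fin g'') ℝ)
    (b b₁ : Matrix (Fin g'') (Fin g'') ℝ)
    (hb : nᵀ * m + b = mᵀ * n + bᵀ) (hb₁ : n₁ᵀ * m₁ + b₁ = m₁ᵀ * n₁ + b₁ᵀ) :
    ((Nmat g' g'' m n b)ᵀ * Jmat g' g'' * Nmat g' g'' m n b = Jmat g' g'') ∧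
    (Nmat g' g'' 0 0 0 = 1) ∧
    (∃ m₂ n₂ b₂, n₂ᵀ * m₂ + b₂ = m₂ᵀ * n₂ + b₂ᵀ ∧
      Nmat g' g'' m n b * Nmat g' g'' m₁ n₁ b₁ = Nmat g' g'' m₂ n₂ b₂) ∧
    (∃ m₃ n₃ b₃, n₃ᵀ * m₃ + b₃ = m₃ᵀ * n₃ + b₃ᵀ ∧
      Nmat g' g'' m n b * Nmat g' g'' m₃ n₃ b₃ = 1) := by
  have key : -(mᵀ * n) + b = -(nᵀ * m) + bᵀ := by
    rw [neg_add_eq_sub, neg_add_eq_sub, sub_eq_sub_iff_add_eq_add, add_comm b,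
      add_comm bᵀ]
    exact hb
  refine ⟨?_, ?_, ?_, ?_⟩
  · unfold Nmat Jmat
    simp [fromBlocks_multiply, fromBlocks_transpose, Matrix.mul_add, Matrix.add_mul,
      transpose_mul, transpose_add, transpose_neg]
    rw [key]
    simp
  · unfold Nmat
    simp [Matrix.fromBlocks_one]
  · refine ⟨m + m₁, n + n₁, b + b₁ + mᵀ * n₁ - nᵀ * m₁, ?_, ?_⟩
    · simp only [transpose_add, transpose_sub, transpose_mul, transpose_transpose,
        Matrix.add_mul, Matrix.mul_add]
      have hL : (nᵀ * m + n₁ᵀ * m + (nᵀ * m₁ + n₁ᵀ * m₁)) + (b + b₁ + mᵀ * n₁ - nᵀ * m₁)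
          = (nᵀ * m + b) + (n₁ᵀ * m₁ + b₁) + (n₁ᵀ * m + mᵀ * n₁) := by abel
      have hR : (mᵀ * n + m₁ᵀ * n + (mᵀ * n₁ + m₁ᵀ * n₁)) + (bᵀ + b₁ᵀ + n₁ᵀ * m - m₁ᵀ * n)
          = (mᵀ * n + bᵀ) + (m₁ᵀ * n₁ + b₁ᵀ) + (n₁ᵀ * m + mᵀ * n₁) := by abel
      rw [hL, hR, hb, hb₁]
    · unfold Nmat
      simp [fromBlocks_multiply, Matrix.mul_add, Matrix.add_mul, transpose_add,
        transpose_sub, transpose_mul, transpose_transpose]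
      rw [fromBlocks_add]
      abel
  · refine ⟨-m, -n, -b + mᵀ * n - nᵀ * m, ?_, ?_⟩
    · simp only [transpose_add, transpose_sub, transpose_neg, transpose_mul,
        transpose_transpose, Matrix.neg_mul, Matrix.mul_neg, neg_neg]
      have k2 : mᵀ * n + -b = nᵀ * m + -bᵀ := by
        rw [← sub_eq_add_neg, ← sub_eq_add_neg, sub_eq_sub_iff_add_eq_add]
        exact hb.symm
      rw [show nᵀ * m + (-b + mᵀ * n - nᵀ * m) = mᵀ * n + -b from by abel,
        show mᵀ * n + (-bᵀ + nᵀ * m - mᵀ * n) = nᵀ * m + -bᵀ from by abel]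
      exact k2
    · unfold Nmat
      simp [fromBlocks_multiply, Matrix.fromBlocks_one, Matrix.mul_add, Matrix.add_mul,
        transpose_add, transpose_sub, transpose_neg, transpose_mul, transpose_transpose]
      have hz : (-(mᵀ * n) + (-b + mᵀ * n - nᵀ * m)) + (nᵀ * m + b) = 0 := by abel
      rw [fromBlocks_add, hz]
      simp [Matrix.fromBlocks_one]
end

section
/- The map Φ(τ) = (τ - i·I_g)·(τ + i·I_g)⁻¹ sends the Siegel upper half space 𝔖_g = {τ ∈ Sym(g, ℂ) : Im(τ) > 0} into the bounded domain 𝔇_g = {Z ∈ Sym(g, ℂ) : I_g - Z·Z̄ > 0}; in particular, for τ ∈ 𝔖_g the matrix τ + i·I_g is invertible, Φ(τ) is symmetric, and I_g - Φ(τ)·conj(Φ(τ)) is positive definite. -/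
open Matrix
open scoped ComplexOrder

/-- The imaginary part of a complex matrix, as a real matrix. -/
def imMat {g : ℕ} (τ : Matrix (Fin g) (Fin g) ℂ) : Matrix (Fin g) (Fin g) ℝ :=
  Matrix.of fun i j => (τ i j).im

private lemma sum_skew_eq_zero {g : ℕ} (f : Fin g → Fin g → ℝ)
    (hf : ∀ i j, f j i = - f i j) : ∑ i, ∑ j, f i j = 0 := by
  have h : (∑ i, ∑ j, f i j) = - ∑ i, ∑ j, f i j := by
    calc (∑ i, ∑ j, f i j) = ∑ j, ∑ i, f i j := Finset.sum_comm
    _ = ∑ j, ∑ i, -(f j i) := by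
        refine Finset.sum_congr rfl fun j _ => Finset.sum_congr rfl fun i _ => ?_
        rw [hf i j]; ring
    _ = - ∑ i, ∑ j, f i j := by simp
  linarith

private lemma posDef_map_ofReal {g : ℕ} {Y : Matrix (Fin g) (Fin g) ℝ} (hY : Y.PosDef) :
    (Y.map (fun r => (r : ℂ))).PosDef := by
  have hsymm : ∀ i j, Y j i = Y i j := by
    intro i j
    have := congrFun (congrFun hY.1.eq i) j
    simpa [conjTranspose_apply] using this
  refine Matrix.PosDef.of_dotProduct_mulVec_pos ?_ ?_
  · ext i j
    simp [conjTranspose_apply, Matrix.map_apply, Complex.conj_ofReal, hsymm]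
  · intro x hx
    set a : Fin g → ℝ := fun i => (x i).re with ha
    set b : Fin g → ℝ := fun i => (x i).im with hb
    have expand : star x ⬝ᵥ (Y.map (fun r => (r:ℂ))) *ᵥ x
        = ∑ i, ∑ j, (Y i j : ℂ) * (starRingEnd ℂ (x i) * x j) := by
      simp only [dotProduct, mulVec, Finset.mul_sum, Matrix.map_apply, Pi.star_apply,
        RCLike.star_def]
      refine Finset.sum_congr rfl fun i _ => Finset.sum_congr rfl fun j _ => ?_
      ring
    have hre : (star x ⬝ᵥ (Y.map (fun r => (r:ℂ))) *ᵥ x).re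
        = a ⬝ᵥ Y *ᵥ a + b ⬝ᵥ Y *ᵥ b := by
      rw [expand]
      simp only [Complex.re_sum]
      simp only [dotProduct, mulVec, Finset.mul_sum]
      rw [← Finset.sum_add_distrib]
      refine Finset.sum_congr rfl fun i _ => ?_
      rw [← Finset.sum_add_distrib]
      refine Finset.sum_congr rfl fun j _ => ?_
      simp only [Complex.mul_re, Complex.mul_im, Complex.ofReal_re, Complex.ofReal_im,
        Complex.conj_re, Complex.conj_im, ha, hb]
      ring
    have him0 : (star x ⬝ᵥ (Y.map (fun r => (r:ℂ))) *ᵥ x).im = 0 := by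
      rw [expand]
      simp only [Complex.im_sum]
      have hterm : ∀ i j, ((Y i j : ℂ) * (starRingEnd ℂ (x i) * x j)).im
          = Y i j * (a i * b j - b i * a j) := by
        intro i j
        simp only [Complex.mul_im, Complex.mul_re, Complex.ofReal_re, Complex.ofReal_im,
          Complex.conj_re, Complex.conj_im, ha, hb]
        ring
      calc (∑ i, ∑ j, ((Y i j : ℂ) * (starRingEnd ℂ (x i) * x j)).im)
          = ∑ i, ∑ j, Y i j * (a i * b j - b i * a j) := by
            exact Finset.sum_congr rfl fun i _ => Finset.sum_congr rfl fun j _ => hterm i j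
        _ = 0 := sum_skew_eq_zero _ (fun i j => by rw [hsymm j i]; ring)
    have hab : a ≠ 0 ∨ b ≠ 0 := by
      by_contra h
      push_neg at h
      apply hx
      funext i
      have h1 := congrFun h.1 i
      have h2 := congrFun h.2 i
      simp only [ha, hb, Pi.zero_apply] at h1 h2
      exact Complex.ext h1 h2
    have h2 : ∀ v : Fin g → ℝ, 0 ≤ v ⬝ᵥ Y *ᵥ v := fun v => by
      simpa using hY.posSemidef.dotProduct_mulVec_nonneg v
    have h3 : ∀ v : Fin g → ℝ, v ≠ 0 → 0 < v ⬝ᵥ Y *ᵥ v := fun v hv => by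
      simpa using hY.dotProduct_mulVec_pos hv
    have hpos : 0 < a ⬝ᵥ Y *ᵥ a + b ⬝ᵥ Y *ᵥ b := by
      rcases hab with h | h
      · linarith [h3 a h, h2 b]
      · linarith [h2 a, h3 b h]
    rw [Complex.lt_def]
    exact ⟨by simpa [hre] using hpos, by simp [him0]⟩

private lemma posDef_mul_mul_conjTranspose {n : Type*} [Fintype n] [DecidableEq n]
    {D N : Matrix n n ℂ} (hD : D.PosDef) (hN : IsUnit N) :
    (N * D * Nᴴ).PosDef := by
  refine Matrix.PosDef.of_dotProduct_mulVec_pos ?_ ?_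
  · exact (hD.posSemidef.mul_mul_conjTranspose_same N).1
  · intro x hx
    have hNH : IsUnit (Nᴴ) := by
      rw [Matrix.isUnit_iff_isUnit_det, Matrix.det_conjTranspose, isUnit_star]
      exact (Matrix.isUnit_iff_isUnit_det N).mp hN
    have hinj : Function.Injective (Nᴴ).mulVec := mulVec_injective_iff_isUnit.2 hNH
    have hx' : Nᴴ *ᵥ x ≠ 0 := by
      intro h0
      exact hx (hinj (by simpa using h0))
    have := hD.dotProduct_mulVec_pos hx'
    simpa only [star_mulVec, dotProduct_mulVec, vecMul_vecMul,
      conjTranspose_conjTranspose] using this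

/-- The Harish-Chandra map `Φ(τ) = (τ - iI)(τ + iI)⁻¹` sends the Siegel upper half
space into the bounded domain `𝔇_g`: for `τ` symmetric with `Im τ > 0`, the matrix
`τ + iI` is invertible, `Φ(τ)` is symmetric, and `I - Φ(τ) conj(Φ(τ))` is positive
definite. -/
theorem harish_chandra_embedding (g : ℕ) (τ : Matrix (Fin g) (Fin g) ℂ)
    (hsym : τ.IsSymm) (him : (imMat τ).PosDef) :
    IsUnit (τ + Complex.I • (1 : Matrix (Fin g) (Fin g) ℂ)).det ∧
    ((τ - Complex.I • 1) * (τ + Complex.I • 1)⁻¹).IsSymm ∧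
    ((1 : Matrix (Fin g) (Fin g) ℂ) -
      ((τ - Complex.I • 1) * (τ + Complex.I • 1)⁻¹) *
        (((τ - Complex.I • 1) * (τ + Complex.I • 1)⁻¹).map (starRingEnd ℂ))).PosDef := by
  set A : Matrix (Fin g) (Fin g) ℂ := τ + Complex.I • 1 with hA
  set B : Matrix (Fin g) (Fin g) ℂ := τ - Complex.I • 1 with hB
  set Yc : Matrix (Fin g) (Fin g) ℂ := (imMat τ).map (fun r => (r : ℂ)) with hYc
  have hYcpos : Yc.PosDef := posDef_map_ofReal him
  have hτsymm : ∀ i j, τ j i = τ i j := fun i j => by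
    have := congrFun (congrFun hsym i) j
    simpa using this
  have hsc : ∀ z : ℂ, z - (starRingEnd ℂ) z = 2 * (z.im : ℂ) * Complex.I := fun z => by
    simpa [Complex.ofReal_mul] using Complex.sub_conj z
  -- key matrix identity for invertibility
  have hkey : A - Aᴴ = (2 * Complex.I) • (Yc + 1) := by
    ext i j
    by_cases h : i = j
    · subst h
      simp only [hA, hYc, Matrix.sub_apply, Matrix.conjTranspose_apply, Matrix.add_apply,
        Matrix.smul_apply, Matrix.one_apply_eq, Matrix.map_apply, imMat, Matrix.of_apply,
        smul_eq_mul, mul_one, star_add, RCLike.star_def, Complex.conj_I]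
      linear_combination hsc (τ i i)
    · simp only [hA, hYc, Matrix.sub_apply, Matrix.conjTranspose_apply, Matrix.add_apply,
        Matrix.smul_apply, Matrix.one_apply_ne h, Matrix.one_apply_ne (Ne.symm h),
        Matrix.map_apply, imMat, Matrix.of_apply, smul_eq_mul, mul_zero, add_zero,
        star_add, RCLike.star_def, Complex.conj_I]
      rw [hτsymm i j]
      linear_combination hsc (τ i j)
  -- invertibility
  have hY1pos : (Yc + 1).PosDef := hYcpos.add Matrix.PosDef.one
  have hAinj : ∀ x : Fin g → ℂ, A *ᵥ x = 0 → x = 0 := by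
    intro x hx0
    by_contra hxne
    have e1 : star x ⬝ᵥ A *ᵥ x = 0 := by rw [hx0, dotProduct_zero]
    have e2 : star x ⬝ᵥ Aᴴ *ᵥ x = 0 := by
      have h1 : star x ⬝ᵥ Aᴴ *ᵥ x = star (star x ⬝ᵥ A *ᵥ x) := by
        rw [star_dotProduct, star_mulVec, Matrix.conjTranspose_conjTranspose,
          ← dotProduct_mulVec]
      rw [h1, e1, star_zero]
    have e3 : star x ⬝ᵥ (A - Aᴴ) *ᵥ x = 0 := by
      rw [Matrix.sub_mulVec, dotProduct_sub, e1, e2, sub_zero]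
    rw [hkey, Matrix.smul_mulVec, dotProduct_smul, smul_eq_mul] at e3
    have hpos := hY1pos.dotProduct_mulVec_pos hxne
    have : (2 * Complex.I) ≠ 0 := by simp [Complex.I_ne_zero]
    exact (mul_ne_zero this (ne_of_gt hpos)) e3
  have hAisunit : IsUnit A := Matrix.mulVec_injective_iff_isUnit.mp (by
    intro u v huv
    have h0 : A *ᵥ (u - v) = 0 := by rw [Matrix.mulVec_sub, huv, sub_self]
    exact sub_eq_zero.mp (hAinj _ h0))
  have hdet : IsUnit A.det := A.isUnit_iff_isUnit_det.mp hAisunit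
  -- symmetry
  have hAT : Aᵀ = A := by
    rw [hA, Matrix.transpose_add, Matrix.transpose_smul, Matrix.transpose_one, hsym.eq]
  have hBT : Bᵀ = B := by
    rw [hB, Matrix.transpose_sub, Matrix.transpose_smul, Matrix.transpose_one, hsym.eq]
  have hcl : ∀ M : Matrix (Fin g) (Fin g) ℂ,
      (Complex.I • (1 : Matrix (Fin g) (Fin g) ℂ)) * M = Complex.I • M := fun M => by
    rw [Matrix.smul_mul, one_mul]
  have hcr : ∀ M : Matrix (Fin g) (Fin g) ℂ,
      M * (Complex.I • (1 : Matrix (Fin g) (Fin g) ℂ)) = Complex.I • M := fun M => by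
    rw [Matrix.mul_smul, mul_one]
  have hcomm : A * B = B * A := by
    rw [hA, hB]
    simp only [mul_add, add_mul, mul_sub, sub_mul, hcl, hcr]
    module
  have h1 : A⁻¹ * A = 1 := Matrix.nonsing_inv_mul A hdet
  have h2 : A * A⁻¹ = 1 := Matrix.mul_nonsing_inv A hdet
  have hABinv : A⁻¹ * B = B * A⁻¹ := by
    calc A⁻¹ * B = A⁻¹ * B * (A * A⁻¹) := by rw [h2, mul_one]
      _ = A⁻¹ * (B * A) * A⁻¹ := by simp only [Matrix.mul_assoc]
      _ = A⁻¹ * (A * B) * A⁻¹ := by rw [hcomm]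
      _ = A⁻¹ * A * (B * A⁻¹) := by simp only [Matrix.mul_assoc]
      _ = B * A⁻¹ := by rw [h1, one_mul]
  have hΦsymm : (B * A⁻¹).IsSymm := by
    show (B * A⁻¹)ᵀ = B * A⁻¹
    rw [Matrix.transpose_mul, Matrix.transpose_nonsing_inv, hAT, hBT, hABinv]
  refine ⟨hdet, hΦsymm, ?_⟩
  -- positivity
  have hmap : (B * A⁻¹).map (starRingEnd ℂ) = (B * A⁻¹)ᴴ := by
    have : (B * A⁻¹)ᴴ = ((B * A⁻¹)ᵀ).map star := rfl
    rw [this, hΦsymm.eq]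
    rfl
  have hAHdet : IsUnit Aᴴ.det := by
    rw [Matrix.det_conjTranspose, isUnit_star]; exact hdet
  have h3 : Aᴴ * (Aᴴ)⁻¹ = 1 := Matrix.mul_nonsing_inv _ hAHdet
  have hABinvH : Bᴴ * (Aᴴ)⁻¹ = (Aᴴ)⁻¹ * Bᴴ := by
    have := congrArg Matrix.conjTranspose hABinv
    simpa only [Matrix.conjTranspose_mul, Matrix.conjTranspose_nonsing_inv] using this
  have t1 : A⁻¹ * (A * Aᴴ) * (Aᴴ)⁻¹ = 1 := by
    calc A⁻¹ * (A * Aᴴ) * (Aᴴ)⁻¹ = A⁻¹ * A * (Aᴴ * (Aᴴ)⁻¹) := by simp only [Matrix.mul_assoc]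
      _ = 1 := by rw [h1, h3, mul_one]
  have t2 : A⁻¹ * (B * Bᴴ) * (Aᴴ)⁻¹ = B * A⁻¹ * (B * A⁻¹)ᴴ := by
    rw [Matrix.conjTranspose_mul, Matrix.conjTranspose_nonsing_inv]
    calc A⁻¹ * (B * Bᴴ) * (Aᴴ)⁻¹ = A⁻¹ * B * (Bᴴ * (Aᴴ)⁻¹) := by simp only [Matrix.mul_assoc]
      _ = B * A⁻¹ * ((Aᴴ)⁻¹ * Bᴴ) := by rw [hABinv, hABinvH]
  have hkey2 : (1 : Matrix (Fin g) (Fin g) ℂ) - (B * A⁻¹) * (B * A⁻¹)ᴴ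
      = A⁻¹ * (A * Aᴴ - B * Bᴴ) * (A⁻¹)ᴴ := by
    rw [Matrix.conjTranspose_nonsing_inv]
    conv_rhs => rw [Matrix.mul_sub, Matrix.sub_mul, t1, t2]
  have hAH : Aᴴ = τᴴ - Complex.I • 1 := by
    rw [hA, Matrix.conjTranspose_add, Matrix.conjTranspose_smul, Matrix.conjTranspose_one]
    rw [RCLike.star_def, Complex.conj_I, neg_smul, ← sub_eq_add_neg]
  have hBH : Bᴴ = τᴴ + Complex.I • 1 := by
    rw [hB, Matrix.conjTranspose_sub, Matrix.conjTranspose_smul, Matrix.conjTranspose_one]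
    rw [RCLike.star_def, Complex.conj_I, neg_smul, sub_neg_eq_add]
  have hD : A * Aᴴ - B * Bᴴ = (4 : ℂ) • Yc := by
    have step1 : A * Aᴴ - B * Bᴴ = (2 * Complex.I) • (τᴴ - τ) := by
      rw [hA, hB, hAH, hBH]
      simp only [mul_add, add_mul, mul_sub, sub_mul, hcl, hcr]
      module
    rw [step1]
    ext i j
    simp only [Matrix.smul_apply, Matrix.sub_apply, Matrix.conjTranspose_apply, hYc,
      Matrix.map_apply, imMat, Matrix.of_apply, smul_eq_mul, RCLike.star_def]
    rw [hτsymm i j]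
    linear_combination (-2 * Complex.I) * hsc (τ i j) + (-4 * ((τ i j).im : ℂ)) * Complex.I_mul_I
  have hDpos : ((4 : ℂ) • Yc).PosDef := by
    refine Matrix.PosDef.of_dotProduct_mulVec_pos ?_ ?_
    · show ((4 : ℂ) • Yc)ᴴ = (4 : ℂ) • Yc
      rw [Matrix.conjTranspose_smul, hYcpos.1.eq]
      norm_num
    · intro x hx
      rw [Matrix.smul_mulVec, dotProduct_smul, smul_eq_mul]
      have h4 : (0 : ℂ) < 4 := by rw [Complex.lt_def]; norm_num
      exact mul_pos h4 (hYcpos.dotProduct_mulVec_pos hx)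
  rw [hmap, hkey2, hD]
  exact posDef_mul_mul_conjTranspose hDpos (Matrix.isUnit_iff_isUnit_det _ |>.mpr
    (A.isUnit_nonsing_inv_det hdet))
end
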